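/- Let x, x^k, x^{k+1} ∈ ℝ^n with Ax = b, and let W ∈ ℝ^{m×m} and u ∈ ℝ^m be such that U := W − euᵀ is symmetric. Then for any α > 0: Σ_{i=1}^m Σ_{j=1}^m w_{ij} ⟨A_i(x_i^{k+1} − x_i), A_j(x_j^{k+1} − x_j^k)⟩ ≤ (1/2)(‖z^{k+1} − z‖_V² − ‖z^k − z‖_V² + ‖z^{k+1} − z^k‖_V²) + (1/(2α))‖Ax^{k+1} − b‖² + (α/2)‖Σ_{i=1}^m u_i (z_i^{k+1} − z_i^k)‖². -/
import Mathlib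


open Matrix Finset

/-- `‖z‖_V²` for a block vector `z = (z_1,…,z_m)`, where `V = U ⊗ I` with
`U := W − euᵀ` (so `U_{ij} = W_{ij} − u_j`): `‖z‖_V² = Σ_{i,j} U_{ij} ⟨z_i, z_j⟩`. -/
def normVSq {m p : ℕ} (W : Matrix (Fin m) (Fin m) ℝ) (u : Fin m → ℝ)
    (z : Fin m → Fin p → ℝ) : ℝ :=
  ∑ i, ∑ j, (W i j - u j) * (z i ⬝ᵥ z j)

lemma young {p : ℕ} (r s : Fin p → ℝ) (α : ℝ) (hα : 0 < α) :
    r ⬝ᵥ s ≤ 1 / (2 * α) * (r ⬝ᵥ r) + α / 2 * (s ⬝ᵥ s) := by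
  have h : 0 ≤ (r - α • s) ⬝ᵥ (r - α • s) :=
    Finset.sum_nonneg fun i _ => mul_self_nonneg _
  simp only [sub_dotProduct, dotProduct_sub, smul_dotProduct,
    dotProduct_smul, smul_eq_mul, dotProduct_comm s r] at h
  have key : (r ⬝ᵥ s) ≤ (r ⬝ᵥ r + α * α * (s ⬝ᵥ s)) / (2 * α) := by
    rw [le_div_iff₀ (by positivity)]
    nlinarith [h]
  calc r ⬝ᵥ s ≤ (r ⬝ᵥ r + α * α * (s ⬝ᵥ s)) / (2 * α) := key
    _ = 1 / (2 * α) * (r ⬝ᵥ r) + α / 2 * (s ⬝ᵥ s) := by field_simp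

lemma sum_dotProduct' {ι : Type*} {p : ℕ} (s : Finset ι) (f : ι → Fin p → ℝ)
    (v : Fin p → ℝ) : (∑ i ∈ s, f i) ⬝ᵥ v = ∑ i ∈ s, f i ⬝ᵥ v := by
  simp only [dotProduct, Finset.sum_apply, Finset.sum_mul]
  rw [Finset.sum_comm]

lemma dotProduct_sum' {ι : Type*} {p : ℕ} (s : Finset ι) (v : Fin p → ℝ)
    (f : ι → Fin p → ℝ) : v ⬝ᵥ (∑ i ∈ s, f i) = ∑ i ∈ s, v ⬝ᵥ f i := by
  simp only [dotProduct, Finset.sum_apply, Finset.mul_sum]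
  rw [Finset.sum_comm]

lemma key_identity {m p : ℕ} (W : Matrix (Fin m) (Fin m) ℝ) (u : Fin m → ℝ)
    (hU : ∀ i j : Fin m, W i j - u j = W j i - u i) (a d : Fin m → Fin p → ℝ) :
    normVSq W u (a - d)
      = normVSq W u a - 2 * (∑ i, ∑ j, (W i j - u j) * (a i ⬝ᵥ d j))
        + normVSq W u d := by
  have hswap : ∑ i, ∑ j, (W i j - u j) * (d i ⬝ᵥ a j)
      = ∑ i, ∑ j, (W i j - u j) * (a i ⬝ᵥ d j) := by
    rw [Finset.sum_comm]
    refine Finset.sum_congr rfl fun i _ => Finset.sum_congr rfl fun j _ => ?_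
    rw [hU j i, dotProduct_comm]
  simp only [normVSq, Pi.sub_apply, sub_dotProduct, dotProduct_sub]
  have expand : ∀ i j : Fin m,
      (W i j - u j) * (a i ⬝ᵥ a j - d i ⬝ᵥ a j - (a i ⬝ᵥ d j - d i ⬝ᵥ d j))
      = (W i j - u j) * (a i ⬝ᵥ a j) - (W i j - u j) * (a i ⬝ᵥ d j)
        - (W i j - u j) * (d i ⬝ᵥ a j) + (W i j - u j) * (d i ⬝ᵥ d j) := by
    intro i j; ring
  simp only [expand, Finset.sum_add_distrib, Finset.sum_sub_distrib]
  rw [hswap]; ring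

/-- Proposition 1, inequality (11) (`z`-version): with `z_i := A_i x_i`
(similarly `z^k`, `z^{k+1}`), `Ax = b`, `U := W − euᵀ` symmetric and any `α > 0`:
`Σ_{i,j} w_{ij} ⟨A_i(x_i^{k+1} − x_i), A_j(x_j^{k+1} − x_j^k)⟩
  ≤ (1/2)(‖z^{k+1} − z‖_V² − ‖z^k − z‖_V² + ‖z^{k+1} − z^k‖_V²)
    + (1/(2α))‖Ax^{k+1} − b‖² + (α/2)‖Σ_i u_i (z_i^{k+1} − z_i^k)‖²`. -/
theorem stmt_5 {m p : ℕ} {n : Fin m → ℕ}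
    (A : ∀ i : Fin m, Matrix (Fin p) (Fin (n i)) ℝ) (b : Fin p → ℝ)
    (W : Matrix (Fin m) (Fin m) ℝ) (u : Fin m → ℝ)
    (hU : ∀ i j : Fin m, W i j - u j = W j i - u i)  -- U = W − euᵀ is symmetric
    (x xk xk1 : ∀ i : Fin m, Fin (n i) → ℝ)
    (hfeas : ∑ i, A i *ᵥ x i = b)
    (α : ℝ) (hα : 0 < α)
    (z zk zk1 : Fin m → Fin p → ℝ)
    (hz : z = fun i => A i *ᵥ x i) (hzk : zk = fun i => A i *ᵥ xk i)
    (hzk1 : zk1 = fun i => A i *ᵥ xk1 i) :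
    ∑ i, ∑ j, W i j * ((A i *ᵥ (xk1 i - x i)) ⬝ᵥ (A j *ᵥ (xk1 j - xk j)))
      ≤ (1 / 2) * (normVSq W u (zk1 - z) - normVSq W u (zk - z)
            + normVSq W u (zk1 - zk))
        + (1 / (2 * α)) *
            (((∑ i, A i *ᵥ xk1 i) - b) ⬝ᵥ ((∑ i, A i *ᵥ xk1 i) - b))
        + (α / 2) *
            ((∑ i, u i • (zk1 i - zk i)) ⬝ᵥ (∑ i, u i • (zk1 i - zk i))) := by
  set r : Fin p → ℝ := (∑ i, A i *ᵥ xk1 i) - b with hr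
  set s : Fin p → ℝ := ∑ i, u i • (zk1 i - zk i) with hs
  -- LHS rewriting
  have hLHS : ∀ i j : Fin m, (A i *ᵥ (xk1 i - x i)) ⬝ᵥ (A j *ᵥ (xk1 j - xk j))
      = (zk1 - z) i ⬝ᵥ (zk1 - zk) j := by
    intro i j
    simp [hz, hzk, hzk1, Matrix.mulVec_sub]
  -- the bilinear identity applied with a = zk1 - z, d = zk1 - zk
  have hdiff : zk - z = (zk1 - z) - (zk1 - zk) := by abel
  have hexp := key_identity W u hU (zk1 - z) (zk1 - zk)
  rw [← hdiff] at hexp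
  -- linear term
  have hlin : ∑ i, ∑ j, u j * ((zk1 - z) i ⬝ᵥ (zk1 - zk) j) = r ⬝ᵥ s := by
    have hra : r = ∑ i, (zk1 - z) i := by
      rw [hr, ← hfeas, hz, hzk1, ← Finset.sum_sub_distrib]
      rfl
    rw [hra, hs, sum_dotProduct']
    refine Finset.sum_congr rfl fun i _ => ?_
    rw [dotProduct_sum']
    refine Finset.sum_congr rfl fun j _ => ?_
    rw [dotProduct_smul, smul_eq_mul]
    rfl
  have hsplit : ∑ i, ∑ j, W i j * ((zk1 - z) i ⬝ᵥ (zk1 - zk) j)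
      = (∑ i, ∑ j, (W i j - u j) * ((zk1 - z) i ⬝ᵥ (zk1 - zk) j)) + r ⬝ᵥ s := by
    rw [← hlin, ← Finset.sum_add_distrib]
    refine Finset.sum_congr rfl fun i _ => ?_
    rw [← Finset.sum_add_distrib]
    exact Finset.sum_congr rfl fun j _ => by ring
  have hy := young r s α hα
  simp only [hLHS]
  rw [hsplit]
  have hhalf : (∑ i, ∑ j, (W i j - u j) * ((zk1 - z) i ⬝ᵥ (zk1 - zk) j))
      = 1 / 2 * (normVSq W u (zk1 - z) - normVSq W u (zk - z) + normVSq W u (zk1 - zk)) := by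
    rw [hexp]; ring
  rw [hhalf]
  linarith
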